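/- arXiv:1706.02181 — 3 statements merged into one kernel-verified Lean document; each statement's English description precedes it below -/
import Mathlib

section
/- The quantity c_0 := inf over unit vectors ω = (ω_1,…,ω_n) ∈ ℝ^{nd} of ∫_0^1 | Σ_{j=1}^n (r^{n−j}/(n−j)!) ω_j |² dr is strictly positive (and depends only on n and d). Consequently, if b : [0,1] → symmetric d×d matrices is measurable with κ^{−1} I_{d×d} ≤ b_r ≤ κ I_{d×d} for all r, σ_r denotes the nd×nd matrix whose only nonzero block is the bottom-right d×d block √(2b_r), and Σ := ∫_0^1 e^{rA} σ_r σ_r^* e^{rA^*} dr, then y^* Σ y ≥ 2 κ^{−1} c_0 |y|² for every y ∈ ℝ^{nd}. -/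
open MeasureTheory Real Matrix Finset
open scoped FourierTransform ENNReal NNReal

noncomputable section

/-- Index set of `ℝ^{nd}` viewed as `(ℝ^d)^n`. -/
abbrev Idx (n d : ℕ) := Fin n × Fin d

/-- The Euclidean space `ℝ^{nd}`. -/
abbrev E (n d : ℕ) := EuclideanSpace ℝ (Idx n d)

variable {n d : ℕ}

def toE (v : Idx n d → ℝ) : E n d := WithLp.toLp 2 v
def ofE (x : E n d) : Idx n d → ℝ := x

/-- Euclidean norm of the `j`-th block of `x ∈ ℝ^{nd}`. -/
def blockNorm (x : E n d) (j : Fin n) : ℝ := Real.sqrt (∑ i : Fin d, (x (j, i)) ^ 2)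

/-- The matrix `e^{tA}`: its `(i,j)`-th `d×d`-block is `(t^{j-i}/(j-i)!) I` for `j ≥ i`,
and `0` otherwise. -/
def expA (n d : ℕ) (t : ℝ) : Matrix (Idx n d) (Idx n d) ℝ := fun p q =>
  if p.1 ≤ q.1 ∧ p.2 = q.2 then
    t ^ ((q.1 : ℕ) - (p.1 : ℕ)) / (((q.1 : ℕ) - (p.1 : ℕ)).factorial : ℝ)
  else 0

/-- `σ^a_t (σ^a_t)^*`: all blocks vanish except the bottom-right `d×d`-block, which is `2a`
(recall that the bottom-right block of `σ^a_t` is the symmetric square root `√(2a_t)`). -/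
def sigmaSq (n : ℕ) {d : ℕ} (a : Matrix (Fin d) (Fin d) ℝ) : Matrix (Idx n d) (Idx n d) ℝ :=
  fun p q => if (p.1 : ℕ) = n - 1 ∧ (q.1 : ℕ) = n - 1 then 2 * a p.2 q.2 else 0

/-- The covariance matrix `Σ_{s,t} = ∫_s^t e^{(t-r)A} σ^a_r (σ^a_r)^* e^{(t-r)A^*} dr`. -/
def SigmaST (n d : ℕ) (a : ℝ → Matrix (Fin d) (Fin d) ℝ) (s t : ℝ) :
    Matrix (Idx n d) (Idx n d) ℝ := fun p q =>
  ∫ r in s..t, (expA n d (t - r) * sigmaSq n (a r) * (expA n d (t - r))ᵀ) p q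

/-- Density of the centered Gaussian measure on `ℝ^{nd}` with covariance matrix `S`. -/
def gaussDensity {n d : ℕ} (S : Matrix (Idx n d) (Idx n d) ℝ) (y : Idx n d → ℝ) : ℝ :=
  Real.exp (-(y ⬝ᵥ S⁻¹.mulVec y) / 2) / Real.sqrt ((2 * π) ^ (n * d) * S.det)

/-- The Gaussian kernel `p^{(0)}_{s,t}`. -/
def pker (n d : ℕ) (a : ℝ → Matrix (Fin d) (Fin d) ℝ) (s t : ℝ) (y : Idx n d → ℝ) : ℝ :=
  gaussDensity (SigmaST n d a s t) y

/-- The two-parameter semigroup `T_{s,t} f (x) = ∫ f(y) p^{(0)}_{s,t}(y - e^{(t-s)A}x) dy`. -/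
def Tst (n d : ℕ) (a : ℝ → Matrix (Fin d) (Fin d) ℝ) (s t : ℝ) (f : E n d → ℂ) (x : E n d) :
    ℂ :=
  ∫ y : E n d, f y * (pker n d a s t (ofE y - (expA n d (t - s)).mulVec (ofE x)) : ℂ)

/-- `a : ℝ → M^d_sym` is measurable, symmetric, with `κ⁻¹ I ≤ a_t ≤ κ I`. -/
def UnifElliptic (d : ℕ) (κ : ℝ) (a : ℝ → Matrix (Fin d) (Fin d) ℝ) : Prop :=
  (∀ i j, Measurable fun t => a t i j) ∧ ∀ t, (a t).IsSymm ∧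
    ∀ y : Fin d → ℝ, κ⁻¹ * (∑ i, y i ^ 2) ≤ y ⬝ᵥ (a t).mulVec y ∧
      y ⬝ᵥ (a t).mulVec y ≤ κ * (∑ i, y i ^ 2)

/-- The fractional Laplacian in the `j`-th block variable, given by the Fourier
multiplier `-|ξ_j|^α` (so that `α = 2γ` corresponds to `Δ^{γ}_{x_j} = -(-Δ_{x_j})^γ`). -/
def fracLap (n d : ℕ) (α : ℝ) (j : Fin n) (f : E n d → ℂ) : E n d → ℂ :=
  𝓕⁻ fun ξ => (-(blockNorm ξ j ^ α) : ℝ) • 𝓕 f ξ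

/-- The multiplier exponent `2/(1+2(n-j))` of `Δ^{1/(1+2(n-j))}_{x_j}`, for `j : Fin n`
(`0`-indexed, so `n - j` in the paper is `n - 1 - j` here). -/
def alphaOf (n : ℕ) (j : Fin n) : ℝ := 2 / (1 + 2 * ((n - 1 - (j : ℕ) : ℕ) : ℝ))

/-- The dilation `Θ_r(x) = (r^{2n-1}x_1, r^{2n-3}x_2, …, r x_n)`. -/
def Theta (n d : ℕ) (r : ℝ) (x : E n d) : E n d :=
  toE fun p => r ^ (2 * (n - 1 - (p.1 : ℕ)) + 1) * x p

/-- `ℓ(t,x) = max { |t|^{1/2}, |x_1|^{1/(2n-1)}, …, |x_{n-1}|^{1/3}, |x_n| }`. -/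
def ell (n d : ℕ) (t : ℝ) (x : E n d) : ℝ :=
  max (|t| ^ ((1 : ℝ) / 2))
    (⨆ j : Fin n, blockNorm x j ^ ((1 : ℝ) / (2 * ((n - 1 - (j : ℕ) : ℕ) : ℝ) + 1)))

/-- The ball `Q_r(t₀,x₀) = {(t,x) : ℓ(t-t₀, x - e^{(t-t₀)A}x₀) ≤ r}`. -/
def Qball (n d : ℕ) (r : ℝ) (t₀ : ℝ) (x₀ : E n d) : Set (ℝ × E n d) :=
  {p | ell n d (p.1 - t₀) (p.2 - toE ((expA n d (p.1 - t₀)).mulVec (ofE x₀))) ≤ r}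

/-- The mollification `f_ε(t,x) = ∫ f(t,y) ε^{-nd} ϱ((x-y)/ε) dy`. -/
def mollify (n d : ℕ) (ϱ : E n d → ℝ) (ε : ℝ) (f : ℝ × E n d → ℂ) (t : ℝ) (x : E n d) : ℂ :=
  ∫ y : E n d, f (t, y) * (((ε ^ (n * d))⁻¹ * ϱ (ε⁻¹ • (x - y)) : ℝ) : ℂ)

/-- `ϱ` is a nonnegative smooth compactly supported probability density. -/
def IsMollifier (n d : ℕ) (ϱ : E n d → ℝ) : Prop :=
  ContDiff ℝ (⊤ : ℕ∞) ϱ ∧ HasCompactSupport ϱ ∧ (∀ x, 0 ≤ ϱ x) ∧ (∫ x : E n d, ϱ x) = 1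

/-- `c₀ = inf_{|ω|=1} ∫_0^1 |Σ_{j=1}^n (r^{n-j}/(n-j)!) ω_j|² dr`. -/
def cZero (n d : ℕ) : ℝ :=
  sInf {v : ℝ | ∃ ω : E n d, ‖ω‖ = 1 ∧
    v = ∫ r in (0:ℝ)..1, ∑ i : Fin d,
      (∑ j : Fin n, r ^ (n - 1 - (j : ℕ)) / ((n - 1 - (j : ℕ)).factorial : ℝ) * ω (j, i)) ^ 2}

namespace S2Aux

variable {n d : ℕ}



def cf (n : ℕ) (j : Fin n) (r : ℝ) : ℝ :=
  r ^ (n - 1 - (j : ℕ)) / ((n - 1 - (j : ℕ)).factorial : ℝ)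

def G (n d : ℕ) (ω : Idx n d → ℝ) (r : ℝ) : ℝ :=
  ∑ i : Fin d, (∑ j : Fin n, cf n j r * ω (j, i)) ^ 2

lemma G_nonneg (ω : Idx n d → ℝ) (r : ℝ) : 0 ≤ G n d ω r :=
  Finset.sum_nonneg fun _ _ => sq_nonneg _

lemma cf_cont (j : Fin n) : Continuous (cf n j) := by
  unfold cf; fun_prop

lemma G_cont (ω : Idx n d → ℝ) : Continuous (G n d ω) := by
  unfold G cf; fun_prop

lemma cf_le_one (j : Fin n) {r : ℝ} (h0 : 0 ≤ r) (h1 : r ≤ 1) : |cf n j r| ≤ 1 := by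
  unfold cf
  rw [abs_div, abs_pow, abs_of_nonneg h0, abs_of_nonneg (by positivity : (0:ℝ) ≤ _)]
  have h2 : r ^ (n - 1 - (j:ℕ)) ≤ 1 := pow_le_one₀ h0 h1
  have h3 : (1:ℝ) ≤ ((n - 1 - (j:ℕ)).factorial : ℝ) := by
    exact_mod_cast Nat.one_le_iff_ne_zero.mpr (Nat.factorial_ne_zero _)
  calc r ^ (n - 1 - (j:ℕ)) / ((n - 1 - (j:ℕ)).factorial : ℝ) ≤ 1 / 1 := by
        apply div_le_div₀ zero_le_one h2 one_pos h3
    _ = 1 := by norm_num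

def Q (n d : ℕ) (ω : Idx n d → ℝ) : ℝ := ∫ r in (0:ℝ)..1, G n d ω r

lemma Q_cont : Continuous fun ω : E n d => Q n d ω := by
  apply intervalIntegral.continuous_parametric_intervalIntegral_of_continuous'
  have : Continuous fun p : E n d × ℝ => G n d p.1 p.2 := by
    unfold G cf
    refine continuous_finset_sum _ fun i _ => ?_
    refine (continuous_finset_sum _ fun j _ => ?_).pow 2
    exact ((continuous_snd.pow _).div_const _).mul
      ((continuous_apply (j, i)).comp ((PiLp.continuous_ofLp 2 _).comp continuous_fst))
  exact this

lemma Q_pos {ω : E n d} (hω : ω ≠ 0) : 0 < Q n d ω := by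
  -- find a nonzero coordinate
  have : ∃ p : Idx n d, ω p ≠ 0 := by
    by_contra h
    push_neg at h
    exact hω (WithLp.ofLp_injective 2 (funext fun p => h p))
  obtain ⟨⟨j₀, i₀⟩, hne⟩ := this
  -- the polynomial whose evaluation is the i₀-th inner sum
  set p : Polynomial ℝ :=
    ∑ j : Fin n, Polynomial.C (ω (j, i₀) / ((n - 1 - (j:ℕ)).factorial : ℝ)) *
      Polynomial.X ^ (n - 1 - (j:ℕ)) with hp
  have heval : ∀ r : ℝ, p.eval r = ∑ j : Fin n, cf n j r * ω (j, i₀) := by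
    intro r
    rw [hp, Polynomial.eval_finset_sum]
    refine Finset.sum_congr rfl fun j _ => ?_
    simp [cf]
    ring
  have hc : p.coeff (n - 1 - (j₀:ℕ)) = ω (j₀, i₀) / ((n - 1 - (j₀:ℕ)).factorial : ℝ) := by
    rw [hp, Polynomial.finset_sum_coeff]
    rw [Finset.sum_eq_single j₀]
    · simp
    · intro j _ hj
      simp only [Polynomial.coeff_C_mul, Polynomial.coeff_X_pow]
      have : ¬ (n - 1 - (j:ℕ) = n - 1 - (j₀:ℕ)) := by
        intro he
        apply hj
        have hj1 := j.2
        have hj2 := j₀.2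
        exact Fin.ext (by omega)
      simp only [mul_ite, mul_one, mul_zero]
      rw [if_neg (fun he => this he.symm)]
    · intro h; exact absurd (Finset.mem_univ _) h
  have hpne : p ≠ 0 := by
    intro h0
    rw [h0, Polynomial.coeff_zero] at hc
    have := div_eq_zero_iff.mp hc.symm
    rcases this with h | h
    · exact hne h
    · exact (Nat.cast_ne_zero (R := ℝ)).mpr (Nat.factorial_ne_zero _) h
  have hroots : Set.Finite {x : ℝ | p.IsRoot x} := Polynomial.finite_setOf_isRoot hpne
  -- G is positive off the root set
  have hGpos : ∀ r : ℝ, ¬ p.IsRoot r → 0 < G n d ω r := by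
    intro r hr
    have h1 : (0:ℝ) < (∑ j : Fin n, cf n j r * ω (j, i₀)) ^ 2 := by
      rw [← heval]; exact sq_pos_of_ne_zero hr
    calc (0:ℝ) < (∑ j : Fin n, cf n j r * ω (j, i₀)) ^ 2 := h1
      _ ≤ G n d ω r :=
        Finset.single_le_sum (f := fun i => (∑ j : Fin n, cf n j r * ω (j, i)) ^ 2)
          (fun i _ => sq_nonneg _) (Finset.mem_univ i₀)
  -- now positivity of the integral
  rw [show Q n d ω = ∫ r in (0:ℝ)..1, G n d ω r from rfl]
  have hint : IntervalIntegrable (G n d ω) volume 0 1 := (G_cont ω).intervalIntegrable 0 1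
  rw [intervalIntegral.integral_pos_iff_support_of_nonneg_ae
    (Filter.Eventually.of_forall (G_nonneg ω)) hint]
  refine ⟨one_pos, ?_⟩
  have hsub : Set.Ioc (0:ℝ) 1 \ {x : ℝ | p.IsRoot x} ⊆
      Function.support (G n d ω) ∩ Set.Ioc 0 1 := by
    rintro r ⟨hr1, hr2⟩
    exact ⟨(hGpos r hr2).ne', hr1⟩
  calc (0:ℝ≥0∞) < 1 := by norm_num
    _ = volume (Set.Ioc (0:ℝ) 1 \ {x : ℝ | p.IsRoot x}) := by
        rw [measure_diff_null (hroots.measure_zero volume)]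
        simp
    _ ≤ volume (Function.support (G n d ω) ∩ Set.Ioc 0 1) := measure_mono hsub



/-- Entry bound for a uniformly elliptic symmetric matrix. -/
lemma entry_bound {d : ℕ} {κ : ℝ} (hκ : 1 ≤ κ) {B : Matrix (Fin d) (Fin d) ℝ}
    (hsym : B.IsSymm)
    (hell : ∀ y : Fin d → ℝ, κ⁻¹ * (∑ i, y i ^ 2) ≤ y ⬝ᵥ B.mulVec y ∧
      y ⬝ᵥ B.mulVec y ≤ κ * (∑ i, y i ^ 2)) (i j : Fin d) : |B i j| ≤ κ := by
  have hκ0 : (0:ℝ) < κ := lt_of_lt_of_le one_pos hκ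
  have hκinv : (0:ℝ) ≤ κ⁻¹ := by positivity
  have hqss : ∀ i' j' : Fin d,
      (Pi.single i' 1 : Fin d → ℝ) ⬝ᵥ B.mulVec (Pi.single j' 1) = B i' j' := by
    intro i' j'
    rw [Matrix.mulVec_single]
    simp [single_dotProduct]
  have hSone : ∀ i' : Fin d, ∑ k, ((Pi.single i' 1 : Fin d → ℝ) k) ^ 2 = 1 := by
    intro i'
    have : ∀ k, ((Pi.single i' 1 : Fin d → ℝ) k) ^ 2 = if k = i' then 1 else 0 := by
      intro k
      by_cases h : k = i' <;> simp [Pi.single_apply, h]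
    simp [this]
  by_cases hij : i = j
  · subst hij
    have h := hell (Pi.single i 1)
    rw [hqss i i, hSone i] at h
    rw [abs_le]
    constructor
    · nlinarith [h.1]
    · simpa using h.2
  · set u : Fin d → ℝ := Pi.single i 1 with hu
    set w : Fin d → ℝ := Pi.single j 1 with hw
    have expand : ∀ z : Fin d → ℝ, (u + z) ⬝ᵥ B.mulVec (u + z)
        = u ⬝ᵥ B.mulVec u + u ⬝ᵥ B.mulVec z + z ⬝ᵥ B.mulVec u + z ⬝ᵥ B.mulVec z := by
      intro z
      rw [Matrix.mulVec_add, add_dotProduct, dotProduct_add,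
        dotProduct_add]
      ring
    have hBji : B j i = B i j := hsym.apply i j
    have hcross : ∀ k, u k * w k = 0 := by
      intro k
      by_cases h1 : k = i
      · subst h1; simp [hu, hw, Pi.single_apply, hij]
      · simp [hu, Pi.single_apply, h1]
    have hSplus : ∑ k, (u k + w k) ^ 2 = 2 := by
      have : ∀ k, (u k + w k) ^ 2 = u k ^ 2 + w k ^ 2 + 2 * (u k * w k) := fun k => by ring
      simp only [this, Finset.sum_add_distrib]
      rw [hSone i, hSone j]
      simp [hcross]
      norm_num
    have hSminus : ∑ k, (u k + (-w) k) ^ 2 = 2 := by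
      have : ∀ k, (u k + (-w) k) ^ 2 = u k ^ 2 + w k ^ 2 - 2 * (u k * w k) := fun k => by
        simp only [Pi.neg_apply]; ring
      simp only [this]
      rw [Finset.sum_sub_distrib, Finset.sum_add_distrib, hSone i, hSone j]
      simp [hcross]
      norm_num
    have hq1 := hell u
    have hq2 := hell w
    have hqp := hell (u + w)
    have hqm := hell (u + (-w))
    simp only [Pi.add_apply] at hqp hqm
    rw [expand w, hqss i i, hqss i j, hqss j i, hqss j j, hSplus] at hqp
    rw [expand (-w)] at hqm
    rw [Matrix.mulVec_neg, dotProduct_neg, neg_dotProduct,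
      neg_dotProduct, dotProduct_neg, neg_neg] at hqm
    rw [hqss i i, hqss i j, hqss j i, hqss j j, hSminus] at hqm
    rw [hqss i i] at hq1
    rw [hqss j j] at hq2
    rw [hSone i] at hq1
    rw [hSone j] at hq2
    rw [abs_le]
    constructor
    · nlinarith [hqm.2, hq1.1, hq2.1, hBji]
    · nlinarith [hqp.2, hq1.1, hq2.1, hBji]


end S2Aux

namespace S2Aux

lemma G_smul {n d : ℕ} (c : ℝ) (ω : E n d) (r : ℝ) : G n d (c • ω) r = c ^ 2 * G n d ω r := by
  unfold G
  rw [Finset.mul_sum]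
  refine Finset.sum_congr rfl fun i _ => ?_
  have h : ∀ j : Fin n, cf n j r * (c • ω.ofLp) (j, i) = c * (cf n j r * ω (j, i)) := by
    intro j
    simp only [Pi.smul_apply, smul_eq_mul]
    ring
  rw [Finset.sum_congr rfl fun j _ => h j, ← Finset.mul_sum]
  ring

lemma Q_smul {n d : ℕ} (c : ℝ) (ω : E n d) : Q n d (c • ω) = c ^ 2 * Q n d ω := by
  unfold Q
  rw [← intervalIntegral.integral_const_mul]
  exact intervalIntegral.integral_congr fun r _ => G_smul c ω r

lemma hQint {n d : ℕ} (ω : Idx n d → ℝ) : True := trivial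

end S2Aux

namespace S2Aux

lemma cZero_eq (n d : ℕ) :
    cZero n d = sInf ((fun ω : E n d => Q n d ω) '' Metric.sphere 0 1) := by
  have hQ : ∀ ω : E n d, Q n d ω = ∫ r in (0:ℝ)..1, ∑ i : Fin d,
      (∑ j : Fin n, r ^ (n - 1 - (j : ℕ)) / ((n - 1 - (j : ℕ)).factorial : ℝ) * ω (j, i)) ^ 2 := by
    intro ω
    unfold Q G cf
    rfl
  unfold cZero
  congr 1
  ext v
  constructor
  · rintro ⟨ω, h1, h2⟩
    exact ⟨ω, mem_sphere_zero_iff_norm.mpr h1, by show Q n d ω = v; rw [hQ ω, h2]⟩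
  · rintro ⟨ω, h1, h2⟩
    refine ⟨ω, mem_sphere_zero_iff_norm.mp h1, ?_⟩
    rw [← h2]
    exact hQ ω

lemma sphere_ne {n d : ℕ} (hn : 0 < n) (hd : 0 < d) :
    (Metric.sphere (0 : E n d) 1).Nonempty := by
  refine ⟨EuclideanSpace.single ((⟨0, hn⟩, ⟨0, hd⟩) : Idx n d) (1:ℝ), ?_⟩
  rw [mem_sphere_zero_iff_norm, EuclideanSpace.norm_single]
  norm_num

lemma isCompact_T (n d : ℕ) : IsCompact ((fun ω : E n d => Q n d ω) '' Metric.sphere 0 1) :=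
  (isCompact_sphere (0 : E n d) 1).image Q_cont

lemma cZero_pos (n d : ℕ) (hn : 0 < n) (hd : 0 < d) : 0 < cZero n d := by
  rw [cZero_eq]
  obtain ⟨ω, hω, hQω⟩ := (isCompact_T n d).sInf_mem ((sphere_ne hn hd).image _)
  rw [← hQω]
  refine Q_pos ?_
  intro h0
  rw [mem_sphere_zero_iff_norm, h0] at hω
  simp at hω

lemma cZero_le_Q {n d : ℕ} (hn : 0 < n) (hd : 0 < d) (y : E n d) :
    cZero n d * ‖y‖ ^ 2 ≤ Q n d y := by
  by_cases hy : y = 0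
  · subst hy
    have : Q n d (0 : E n d) = 0 := by
      unfold Q
      have : ∀ r ∈ Set.uIcc (0:ℝ) 1, G n d (0 : E n d) r = 0 := by
        intro r _
        unfold G
        simp
      rw [intervalIntegral.integral_congr this]
      simp
    rw [this]
    simp
  · have hny : ‖y‖ ≠ 0 := norm_ne_zero_iff.mpr hy
    set u : E n d := ‖y‖⁻¹ • y with hu
    have hu1 : ‖u‖ = 1 := by
      rw [hu, norm_smul, norm_inv, norm_norm, inv_mul_cancel₀ hny]
    have hyu : y = ‖y‖ • u := (smul_inv_smul₀ hny y).symm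
    have h1 : cZero n d ≤ Q n d u := by
      rw [cZero_eq]
      exact csInf_le (isCompact_T n d).bddBelow ⟨u, mem_sphere_zero_iff_norm.mpr hu1, rfl⟩
    have h2 : Q n d y = ‖y‖ ^ 2 * Q n d u := by
      conv_lhs => rw [hyu]
      rw [WithLp.ofLp_smul, Q_smul]
    rw [h2]
    have := mul_le_mul_of_nonneg_right h1 (sq_nonneg ‖y‖)
    linarith

end S2Aux


namespace S2Aux

lemma sum4 {n d : ℕ} (t : Fin n → Fin d → Fin n → Fin d → ℝ) :
    (∑ j : Fin n, ∑ i : Fin d, ∑ j' : Fin n, ∑ i' : Fin d, t j i j' i')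
      = ∑ i : Fin d, ∑ i' : Fin d, ∑ j' : Fin n, ∑ j : Fin n, t j i j' i' := by
  calc (∑ j : Fin n, ∑ i : Fin d, ∑ j' : Fin n, ∑ i' : Fin d, t j i j' i')
      = ∑ j : Fin n, ∑ i : Fin d, ∑ i' : Fin d, ∑ j' : Fin n, t j i j' i' := by
        exact Finset.sum_congr rfl fun j _ => Finset.sum_congr rfl fun i _ => Finset.sum_comm
    _ = ∑ i : Fin d, ∑ j : Fin n, ∑ i' : Fin d, ∑ j' : Fin n, t j i j' i' := Finset.sum_comm
    _ = ∑ i : Fin d, ∑ i' : Fin d, ∑ j : Fin n, ∑ j' : Fin n, t j i j' i' := by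
        exact Finset.sum_congr rfl fun i _ => Finset.sum_comm
    _ = ∑ i : Fin d, ∑ i' : Fin d, ∑ j' : Fin n, ∑ j : Fin n, t j i j' i' := by
        exact Finset.sum_congr rfl fun i _ => Finset.sum_congr rfl fun i' _ => Finset.sum_comm

lemma factorize {n d : ℕ} (y : Fin n × Fin d → ℝ) (B : Matrix (Fin d) (Fin d) ℝ) (r : ℝ) :
    ∑ pq : (Fin n × Fin d) × (Fin n × Fin d),
      y pq.1 * ((2 * cf n pq.1.1 r * cf n pq.2.1 r * B pq.1.2 pq.2.2) * y pq.2)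
    = 2 * ((fun i => ∑ j : Fin n, cf n j r * y (j, i)) ⬝ᵥ
        B.mulVec (fun i => ∑ j : Fin n, cf n j r * y (j, i))) := by
  simp only [Matrix.mulVec, dotProduct, Fintype.sum_prod_type, Finset.mul_sum,
    Finset.sum_mul]
  rw [sum4 (fun j i j' i' => y (j, i) * (2 * cf n j r * cf n j' r * B i i' * y (j', i')))]
  refine Finset.sum_congr rfl fun i _ => Finset.sum_congr rfl fun i' _ =>
    Finset.sum_congr rfl fun j' _ => Finset.sum_congr rfl fun j _ => ?_
  ring

lemma entry_eq {n d : ℕ} (hn : 2 ≤ n) (B : Matrix (Fin d) (Fin d) ℝ) (r : ℝ) (p q : Idx n d) :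
    (expA n d r * sigmaSq n B * (expA n d r)ᵀ) p q
      = 2 * cf n p.1 r * cf n q.1 r * B p.2 q.2 := by
  have hn1 : n - 1 < n := by omega
  have c1 : p.1 ≤ (⟨n - 1, hn1⟩ : Fin n) := by
    rw [Fin.le_def]
    show (p.1 : ℕ) ≤ n - 1
    have := p.1.isLt
    omega
  have c2 : q.1 ≤ (⟨n - 1, hn1⟩ : Fin n) := by
    rw [Fin.le_def]
    show (q.1 : ℕ) ≤ n - 1
    have := q.1.isLt
    omega
  simp only [Matrix.mul_apply, Matrix.transpose_apply]
  rw [Finset.sum_eq_single ((⟨n - 1, hn1⟩, q.2) : Idx n d)]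
  · rw [Finset.sum_eq_single ((⟨n - 1, hn1⟩, p.2) : Idx n d)]
    · simp only [expA, sigmaSq]
      rw [if_pos ⟨c1, trivial⟩, if_pos ⟨trivial, trivial⟩, if_pos ⟨c2, trivial⟩]
      unfold cf
      ring
    · intro l _ hl
      by_cases h2 : p.2 = l.2
      · have h1 : (l.1 : ℕ) ≠ n - 1 := by
          intro h
          exact hl (Prod.ext (Fin.ext h) h2.symm)
        have hz : sigmaSq n B l (⟨n - 1, hn1⟩, q.2) = 0 := by simp [sigmaSq, h1]
        rw [hz, mul_zero]
      · have hz : expA n d r p l = 0 := by simp [expA, h2]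
        rw [hz, zero_mul]
    · intro h
      exact absurd (Finset.mem_univ _) h
  · intro k _ hk
    by_cases h2 : q.2 = k.2
    · have h1 : (k.1 : ℕ) ≠ n - 1 := fun h => hk (Prod.ext (Fin.ext h) h2.symm)
      have hz : ∀ l, sigmaSq n B l k = 0 := fun l => by simp [sigmaSq, h1]
      simp [hz]
    · have hz : expA n d r q k = 0 := by simp [expA, h2]
      rw [hz, mul_zero]
  · intro h
    exact absurd (Finset.mem_univ _) h

end S2Aux

/-- `c₀ > 0`, and consequently for every measurable `b : [0,1] → M^d_sym`
with `κ⁻¹ I ≤ b_r ≤ κ I`, the matrix `Σ = ∫_0^1 e^{rA} σ_r σ_r^* e^{rA^*} dr`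
(where `σ_r σ_r^*` has the single nonzero block `2 b_r` in the bottom-right corner)
satisfies `y^* Σ y ≥ 2 κ⁻¹ c₀ |y|²` for every `y ∈ ℝ^{nd}`. -/
theorem statement2 (n d : ℕ) (hn : 2 ≤ n) (hd : 1 ≤ d) (κ : ℝ) (hκ : 1 ≤ κ) :
    0 < cZero n d ∧
    ∀ b : ℝ → Matrix (Fin d) (Fin d) ℝ,
      (∀ i j, Measurable fun r => b r i j) →
      (∀ r ∈ Set.Icc (0:ℝ) 1, (b r).IsSymm ∧
        ∀ y : Fin d → ℝ, κ⁻¹ * (∑ i, y i ^ 2) ≤ y ⬝ᵥ (b r).mulVec y ∧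
          y ⬝ᵥ (b r).mulVec y ≤ κ * (∑ i, y i ^ 2)) →
      ∀ y : E n d,
        2 * κ⁻¹ * cZero n d * ‖y‖ ^ 2 ≤
          ofE y ⬝ᵥ
            (Matrix.of fun p q : Idx n d => ∫ r in (0:ℝ)..1,
              (expA n d r * sigmaSq n (b r) * (expA n d r)ᵀ) p q).mulVec (ofE y) := by
  have hn0 : 0 < n := by omega
  have hd0 : 0 < d := by omega
  refine ⟨S2Aux.cZero_pos n d hn0 hd0, ?_⟩
  intro b hbmeas hbell y
  have hκ0 : (0:ℝ) < κ := lt_of_lt_of_le one_pos hκ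
  have hentry : ∀ (r : ℝ) (p q : Idx n d),
      (expA n d r * sigmaSq n (b r) * (expA n d r)ᵀ) p q
        = 2 * S2Aux.cf n p.1 r * S2Aux.cf n q.1 r * b r p.2 q.2 :=
    fun r p q => S2Aux.entry_eq hn (b r) r p q
  -- integrability of each entry
  have hfint : ∀ p q : Idx n d, IntervalIntegrable
      (fun r => (expA n d r * sigmaSq n (b r) * (expA n d r)ᵀ) p q) volume 0 1 := by
    intro p q
    rw [intervalIntegrable_iff, Set.uIoc_of_le zero_le_one]
    have heq : (fun r => (expA n d r * sigmaSq n (b r) * (expA n d r)ᵀ) p q)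
        = fun r => 2 * S2Aux.cf n p.1 r * S2Aux.cf n q.1 r * b r p.2 q.2 :=
      funext fun r => hentry r p q
    rw [heq]
    have hmeas' : AEStronglyMeasurable
        (fun r => 2 * S2Aux.cf n p.1 r * S2Aux.cf n q.1 r * b r p.2 q.2)
        (volume.restrict (Set.Ioc (0:ℝ) 1)) :=
      (((measurable_const.mul (S2Aux.cf_cont (n := n) p.1).measurable).mul
        (S2Aux.cf_cont (n := n) q.1).measurable).mul (hbmeas p.2 q.2)).aestronglyMeasurable
    refine Integrable.mono' (g := fun _ => 2 * κ) ?_ hmeas' ?_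
    · exact (integrableOn_const_iff).mpr (Or.inr (by simp))
    · rw [ae_restrict_iff' measurableSet_Ioc]
      filter_upwards with r hr
      have h0r : (0:ℝ) ≤ r := le_of_lt hr.1
      have hrIcc : r ∈ Set.Icc (0:ℝ) 1 := ⟨h0r, hr.2⟩
      have hb := S2Aux.entry_bound hκ (hbell r hrIcc).1 (hbell r hrIcc).2 p.2 q.2
      have hc1 := S2Aux.cf_le_one (n := n) p.1 h0r hr.2
      have hc2 := S2Aux.cf_le_one (n := n) q.1 h0r hr.2
      have habs : ‖2 * S2Aux.cf n p.1 r * S2Aux.cf n q.1 r * b r p.2 q.2‖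
          = 2 * |S2Aux.cf n p.1 r| * |S2Aux.cf n q.1 r| * |b r p.2 q.2| := by
        rw [Real.norm_eq_abs, abs_mul, abs_mul, abs_mul]
        norm_num
      rw [habs]
      have h1 : |S2Aux.cf n p.1 r| * |S2Aux.cf n q.1 r| ≤ 1 :=
        mul_le_one₀ hc1 (abs_nonneg _) hc2
      have h2 : |S2Aux.cf n p.1 r| * |S2Aux.cf n q.1 r| * |b r p.2 q.2| ≤ 1 * κ :=
        mul_le_mul h1 hb (abs_nonneg _) zero_le_one
      nlinarith [h2]
  have hterm : ∀ pq : Idx n d × Idx n d, IntervalIntegrable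
      (fun r => y pq.1 * ((expA n d r * sigmaSq n (b r) * (expA n d r)ᵀ) pq.1 pq.2 * y pq.2))
      volume 0 1 := fun pq => ((hfint pq.1 pq.2).mul_const _).const_mul _
  have hSsum : IntervalIntegrable (fun r => ∑ pq : Idx n d × Idx n d,
      y pq.1 * ((expA n d r * sigmaSq n (b r) * (expA n d r)ᵀ) pq.1 pq.2 * y pq.2))
      volume 0 1 := by
    have := IntervalIntegrable.sum (μ := volume) (a := (0:ℝ)) (b := (1:ℝ)) Finset.univ
      (f := fun (pq : Idx n d × Idx n d) (r : ℝ) =>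
        y pq.1 * ((expA n d r * sigmaSq n (b r) * (expA n d r)ᵀ) pq.1 pq.2 * y pq.2))
      (fun pq _ => hterm pq)
    have heq : (fun r => ∑ pq : Idx n d × Idx n d,
        y pq.1 * ((expA n d r * sigmaSq n (b r) * (expA n d r)ᵀ) pq.1 pq.2 * y pq.2))
        = ∑ pq : Idx n d × Idx n d, fun r =>
          y pq.1 * ((expA n d r * sigmaSq n (b r) * (expA n d r)ᵀ) pq.1 pq.2 * y pq.2) := by
      funext r
      rw [Finset.sum_apply]
    rw [heq]
    exact this
  have hswap : ofE y ⬝ᵥ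
      (Matrix.of fun p q : Idx n d => ∫ r in (0:ℝ)..1,
        (expA n d r * sigmaSq n (b r) * (expA n d r)ᵀ) p q).mulVec (ofE y)
      = ∫ r in (0:ℝ)..1, ∑ pq : Idx n d × Idx n d,
          y pq.1 * ((expA n d r * sigmaSq n (b r) * (expA n d r)ᵀ) pq.1 pq.2 * y pq.2) := by
    rw [intervalIntegral.integral_finset_sum (fun pq _ => hterm pq)]
    simp only [Matrix.mulVec, dotProduct, Matrix.of_apply, ofE, Finset.mul_sum]
    conv_rhs => rw [Fintype.sum_prod_type]
    refine Finset.sum_congr rfl fun p _ => Finset.sum_congr rfl fun q _ => ?_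
    rw [intervalIntegral.integral_const_mul, intervalIntegral.integral_mul_const]
  have hkey : ∀ r ∈ Set.Icc (0:ℝ) 1,
      2 * κ⁻¹ * S2Aux.G n d y r ≤ ∑ pq : Idx n d × Idx n d,
        y pq.1 * ((expA n d r * sigmaSq n (b r) * (expA n d r)ᵀ) pq.1 pq.2 * y pq.2) := by
    intro r hr
    have hfact : (∑ pq : Idx n d × Idx n d,
        y pq.1 * ((expA n d r * sigmaSq n (b r) * (expA n d r)ᵀ) pq.1 pq.2 * y pq.2))
        = 2 * ((fun i => ∑ j : Fin n, S2Aux.cf n j r * y (j, i)) ⬝ᵥ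
            (b r).mulVec (fun i => ∑ j : Fin n, S2Aux.cf n j r * y (j, i))) := by
      rw [Finset.sum_congr rfl fun pq _ => by rw [hentry r pq.1 pq.2]]
      exact S2Aux.factorize (fun p => y p) (b r) r
    rw [hfact]
    have hell := ((hbell r hr).2 (fun i => ∑ j : Fin n, S2Aux.cf n j r * y (j, i))).1
    have hG : S2Aux.G n d y r
        = ∑ i, (fun i => ∑ j : Fin n, S2Aux.cf n j r * y (j, i)) i ^ 2 := rfl
    rw [hG]
    nlinarith [hell]
  have hGint : IntervalIntegrable (fun r => 2 * κ⁻¹ * S2Aux.G n d y r) volume 0 1 :=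
    (continuous_const.mul (S2Aux.G_cont (fun p => y p))).intervalIntegrable 0 1
  calc 2 * κ⁻¹ * cZero n d * ‖y‖ ^ 2
      ≤ 2 * κ⁻¹ * S2Aux.Q n d y := by
        have h1 := S2Aux.cZero_le_Q hn0 hd0 y
        have h2 : (0:ℝ) ≤ 2 * κ⁻¹ := by positivity
        calc 2 * κ⁻¹ * cZero n d * ‖y‖ ^ 2 = 2 * κ⁻¹ * (cZero n d * ‖y‖ ^ 2) := by ring
          _ ≤ 2 * κ⁻¹ * S2Aux.Q n d y := mul_le_mul_of_nonneg_left h1 h2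
    _ = ∫ r in (0:ℝ)..1, 2 * κ⁻¹ * S2Aux.G n d y r := by
        rw [intervalIntegral.integral_const_mul]
        rfl
    _ ≤ ∫ r in (0:ℝ)..1, ∑ pq : Idx n d × Idx n d,
          y pq.1 * ((expA n d r * sigmaSq n (b r) * (expA n d r)ᵀ) pq.1 pq.2 * y pq.2) :=
        intervalIntegral.integral_mono_on zero_le_one hGint hSsum hkey
    _ = _ := hswap.symm
end
end

section
/- For all (t,x), (s,y), (r,z) ∈ ℝ × ℝ^{nd} one has the quasi-triangle inequalities ℓ(s−t, y − e^{(s−t)A}x) ≤ 3 ℓ(t−s, x − e^{(t−s)A}y) and ℓ(t−s, x − e^{(t−s)A}y) ≤ 4 ( ℓ(t−r, x − e^{(t−r)A}z) + ℓ(r−s, z − e^{(r−s)A}y) ). -/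
open MeasureTheory Real Matrix Finset
open scoped FourierTransform ENNReal NNReal

noncomputable section

variable {n d : ℕ}

namespace Stmt5

variable {n d : ℕ}

/-- The `j`-th block of `x` as an element of `EuclideanSpace ℝ (Fin d)`. -/
def bvec (x : E n d) (j : Fin n) : EuclideanSpace ℝ (Fin d) := WithLp.toLp 2 (fun i => x (j, i))

lemma blockNorm_eq (x : E n d) (j : Fin n) : blockNorm x j = ‖bvec x j‖ := by
  rw [EuclideanSpace.norm_eq]
  simp [blockNorm, bvec, sq_abs]

lemma blockNorm_nonneg (x : E n d) (j : Fin n) : 0 ≤ blockNorm x j := Real.sqrt_nonneg _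

lemma bvec_add (x y : E n d) (j : Fin n) : bvec (x + y) j = bvec x j + bvec y j := by
  ext i; simp [bvec]

lemma bvec_neg (x : E n d) (j : Fin n) : bvec (-x) j = -(bvec x j) := by
  ext i; simp [bvec]

lemma blockNorm_neg (x : E n d) (j : Fin n) : blockNorm (-x) j = blockNorm x j := by
  rw [blockNorm_eq, blockNorm_eq, bvec_neg, norm_neg]

lemma blockNorm_add_le (x y : E n d) (j : Fin n) :
    blockNorm (x + y) j ≤ blockNorm x j + blockNorm y j := by
  rw [blockNorm_eq, blockNorm_eq, blockNorm_eq, bvec_add]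
  exact norm_add_le _ _

lemma expA_apply_same (t : ℝ) (i k : Fin n) (ii : Fin d) :
    expA n d t (i, ii) (k, ii)
      = if (i : ℕ) ≤ (k : ℕ) then
          t ^ ((k : ℕ) - (i : ℕ)) / (((k : ℕ) - (i : ℕ)).factorial : ℝ) else 0 := by
  unfold expA
  by_cases h : (i : ℕ) ≤ (k : ℕ)
  · rw [if_pos ⟨h, rfl⟩, if_pos h]
  · rw [if_neg (fun hc => h hc.1), if_neg h]

lemma expA_apply_ne (t : ℝ) (i k : Fin n) {ii kk : Fin d} (h : ii ≠ kk) :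
    expA n d t (i, ii) (k, kk) = 0 := by
  unfold expA
  exact if_neg (fun hc => h hc.2)

/-- The Vandermonde-type identity for exponential coefficients. -/
lemma binom (a b : ℝ) (m : ℕ) :
    ∑ l ∈ Finset.range (m + 1),
      a ^ l / (l.factorial : ℝ) * (b ^ (m - l) / ((m - l).factorial : ℝ))
    = (a + b) ^ m / (m.factorial : ℝ) := by
  rw [add_pow, Finset.sum_div]
  refine Finset.sum_congr rfl fun l hl => ?_
  have hlm : l ≤ m := Nat.lt_succ_iff.mp (Finset.mem_range.mp hl)
  rw [Nat.cast_choose ℝ hlm]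
  have h1 : (l.factorial : ℝ) ≠ 0 := by exact_mod_cast (Nat.factorial_pos l).ne'
  have h2 : ((m - l).factorial : ℝ) ≠ 0 := by exact_mod_cast (Nat.factorial_pos (m - l)).ne'
  have h3 : (m.factorial : ℝ) ≠ 0 := by exact_mod_cast (Nat.factorial_pos m).ne'
  field_simp

/-- Semigroup property of `expA`. -/
lemma expA_mul (a b : ℝ) : expA n d a * expA n d b = expA n d (a + b) := by
  ext ⟨i, ii⟩ ⟨j, jj⟩
  rw [Matrix.mul_apply, Fintype.sum_prod_type]
  by_cases hij : ii = jj
  · subst hij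
    have hinner : ∀ k : Fin n,
        (∑ kk : Fin d, expA n d a (i, ii) (k, kk) * expA n d b (k, kk) (j, ii))
        = (fun kn : ℕ => if (i : ℕ) ≤ kn ∧ kn ≤ (j : ℕ) then
            a ^ (kn - (i : ℕ)) / ((kn - (i : ℕ)).factorial : ℝ) *
            (b ^ ((j : ℕ) - kn) / (((j : ℕ) - kn).factorial : ℝ)) else 0) ((k : ℕ)) := by
      intro k
      rw [Finset.sum_eq_single ii]
      · rw [expA_apply_same, expA_apply_same]
        by_cases h1 : (i : ℕ) ≤ (k : ℕ) <;> by_cases h2 : (k : ℕ) ≤ (j : ℕ) <;>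
          simp [h1, h2]
      · intro kk _ hkk
        rw [expA_apply_ne _ _ _ (Ne.symm hkk), zero_mul]
      · intro hmem; exact absurd (Finset.mem_univ _) hmem
    rw [Finset.sum_congr rfl fun k _ => hinner k,
      Fin.sum_univ_eq_sum_range (fun kn : ℕ => if (i : ℕ) ≤ kn ∧ kn ≤ (j : ℕ) then
            a ^ (kn - (i : ℕ)) / ((kn - (i : ℕ)).factorial : ℝ) *
            (b ^ ((j : ℕ) - kn) / (((j : ℕ) - kn).factorial : ℝ)) else 0),
      ← Finset.sum_filter]
    have hfil : (Finset.range n).filter (fun kn => (i : ℕ) ≤ kn ∧ kn ≤ (j : ℕ))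
        = Finset.Ico (i : ℕ) ((j : ℕ) + 1) := by
      ext kn
      have := j.isLt
      simp only [Finset.mem_filter, Finset.mem_range, Finset.mem_Ico]
      omega
    rw [hfil, Finset.sum_Ico_eq_sum_range]
    by_cases hle : (i : ℕ) ≤ (j : ℕ)
    · have hjm : (j : ℕ) + 1 - (i : ℕ) = ((j : ℕ) - (i : ℕ)) + 1 := by omega
      rw [hjm]
      have hterm : ∀ l ∈ Finset.range (((j : ℕ) - (i : ℕ)) + 1),
          a ^ ((i : ℕ) + l - (i : ℕ)) / (((i : ℕ) + l - (i : ℕ)).factorial : ℝ) *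
            (b ^ ((j : ℕ) - ((i : ℕ) + l)) / (((j : ℕ) - ((i : ℕ) + l)).factorial : ℝ))
          = a ^ l / (l.factorial : ℝ) *
            (b ^ (((j : ℕ) - (i : ℕ)) - l) / (((((j : ℕ) - (i : ℕ)) - l)).factorial : ℝ)) := by
        intro l hl
        have e1 : (i : ℕ) + l - (i : ℕ) = l := by omega
        have e2 : (j : ℕ) - ((i : ℕ) + l) = ((j : ℕ) - (i : ℕ)) - l := by omega
        rw [e1, e2]
      rw [Finset.sum_congr rfl hterm, binom, expA_apply_same, if_pos hle]
    · have h0 : (j : ℕ) + 1 - (i : ℕ) = 0 := by omega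
      rw [h0, Finset.range_zero, Finset.sum_empty, expA_apply_same, if_neg hle]
  · have hz : ∀ k : Fin n,
        (∑ kk : Fin d, expA n d a (i, ii) (k, kk) * expA n d b (k, kk) (j, jj)) = 0 := by
      intro k
      refine Finset.sum_eq_zero fun kk _ => ?_
      by_cases h : ii = kk
      · subst h; rw [expA_apply_ne _ _ _ hij, mul_zero]
      · rw [expA_apply_ne _ _ _ h, zero_mul]
    rw [Finset.sum_congr rfl fun k _ => hz k, Finset.sum_const_zero,
      expA_apply_ne _ _ _ hij]

lemma expA_zero : expA n d 0 = 1 := by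
  ext ⟨i, ii⟩ ⟨j, jj⟩
  rw [Matrix.one_apply]
  by_cases hij : i = j
  · by_cases h2 : ii = jj
    · subst hij; subst h2; simp [expA]
    · have hne : ¬((i, ii) = (j, jj)) := by simp [h2]
      rw [if_neg hne]
      unfold expA
      split
    
      · next h => exact absurd h.2 h2
      · rfl
  · have hne : ¬((i, ii) = (j, jj)) := by simp [hij]
    rw [if_neg hne]
    unfold expA
    split
    · next h =>
        have h1 : (i : ℕ) ≤ (j : ℕ) := h.1
        have h2' : (i : ℕ) ≠ (j : ℕ) := fun hh => hij (Fin.ext hh)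
        have hne : ((j, jj).1 : ℕ) - ((i, ii).1 : ℕ) ≠ 0 := by
          show (j : ℕ) - (i : ℕ) ≠ 0
          omega
        rw [zero_pow hne, zero_div]
    · rfl

/-- The block decomposition of `expA * v`. -/
lemma mulVec_bvec (t : ℝ) (v : E n d) (j : Fin n) :
    bvec (toE ((expA n d t).mulVec (ofE v))) j =
      ∑ k : Fin n, (if (j : ℕ) ≤ (k : ℕ) then
        t ^ ((k : ℕ) - (j : ℕ)) / (((k : ℕ) - (j : ℕ)).factorial : ℝ) else 0) • bvec v k := by
  ext i
  have : (∑ k : Fin n, (if (j : ℕ) ≤ (k : ℕ) then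
        t ^ ((k : ℕ) - (j : ℕ)) / (((k : ℕ) - (j : ℕ)).factorial : ℝ) else 0) • bvec v k) i
      = ∑ k : Fin n, (if (j : ℕ) ≤ (k : ℕ) then
        t ^ ((k : ℕ) - (j : ℕ)) / (((k : ℕ) - (j : ℕ)).factorial : ℝ) else 0) * v (k, i) :=
    by rw [WithLp.ofLp_sum, Finset.sum_apply]; exact Finset.sum_congr rfl fun k _ => rfl
  rw [this]
  show (expA n d t).mulVec (ofE v) (j, i) = _
  rw [Matrix.mulVec, dotProduct, Fintype.sum_prod_type]
  refine Finset.sum_congr rfl fun k _ => ?_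
  rw [Finset.sum_eq_single i]
  · rw [expA_apply_same]
    rfl
  · intro b _ hb
    rw [expA_apply_ne _ _ _ (Ne.symm hb), zero_mul]
  · intro hmem; exact absurd (Finset.mem_univ _) hmem

lemma blockNorm_mulVec_le (t : ℝ) (v : E n d) (j : Fin n) :
    blockNorm (toE ((expA n d t).mulVec (ofE v))) j ≤
      ∑ k : Fin n, (if (j : ℕ) ≤ (k : ℕ) then
        |t| ^ ((k : ℕ) - (j : ℕ)) / (((k : ℕ) - (j : ℕ)).factorial : ℝ) else 0) *
        blockNorm v k := by
  rw [blockNorm_eq, mulVec_bvec]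
  refine (norm_sum_le _ _).trans ?_
  refine Finset.sum_le_sum fun k _ => ?_
  rw [norm_smul, Real.norm_eq_abs, blockNorm_eq]
  split
  · rw [abs_div, abs_pow, Nat.abs_cast]
  · simp

lemma sum_inv_factorial_le (j : Fin n) :
    (∑ k : Fin n, (if (j : ℕ) ≤ (k : ℕ) then
        (1 : ℝ) / (((k : ℕ) - (j : ℕ)).factorial : ℝ) else 0)) ≤ 3 := by
  rw [Fin.sum_univ_eq_sum_range
    (fun k => if (j : ℕ) ≤ k then (1 : ℝ) / ((k - (j : ℕ)).factorial : ℝ) else 0)]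
  rw [← Finset.sum_filter]
  have hfil : (Finset.range n).filter (fun k => (j : ℕ) ≤ k) = Finset.Ico (j : ℕ) n := by
    ext k; simp [Finset.mem_filter, Finset.mem_Ico, and_comm]
  rw [hfil, Finset.sum_Ico_eq_sum_range]
  have : ∀ l ∈ Finset.range (n - (j : ℕ)),
      (1 : ℝ) / ((((j : ℕ) + l) - (j : ℕ)).factorial : ℝ) = 1 ^ l / (l.factorial : ℝ) := by
    intro l _
    have hj : (j : ℕ) + l - (j : ℕ) = l := by omega
    rw [hj, one_pow]
  rw [Finset.sum_congr rfl this]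
  calc (∑ l ∈ Finset.range (n - (j : ℕ)), (1:ℝ) ^ l / (l.factorial : ℝ))
      ≤ Real.exp 1 := Real.sum_le_exp_of_nonneg zero_le_one _
    _ ≤ 3 := by linarith [Real.exp_one_lt_d9]

/-- Key estimate: if each block of `v` is bounded by the corresponding power of `L` and
`|τ| ≤ L²`, then the blocks of `e^{τA} v` are bounded by `3` times the same powers. -/
lemma est (τ L : ℝ) (v : E n d) (hL : 0 ≤ L) (hτ : |τ| ≤ L ^ 2)
    (hv : ∀ k : Fin n, blockNorm v k ≤ L ^ (2 * (n - 1 - (k : ℕ)) + 1)) (j : Fin n) :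
    blockNorm (toE ((expA n d τ).mulVec (ofE v))) j ≤ 3 * L ^ (2 * (n - 1 - (j : ℕ)) + 1) := by
  refine (blockNorm_mulVec_le τ v j).trans ?_
  have step : ∀ k : Fin n,
      (if (j : ℕ) ≤ (k : ℕ) then
        |τ| ^ ((k : ℕ) - (j : ℕ)) / (((k : ℕ) - (j : ℕ)).factorial : ℝ) else 0) * blockNorm v k
      ≤ (if (j : ℕ) ≤ (k : ℕ) then
        (1 : ℝ) / (((k : ℕ) - (j : ℕ)).factorial : ℝ) else 0) *
        L ^ (2 * (n - 1 - (j : ℕ)) + 1) := by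
    intro k
    by_cases h : (j : ℕ) ≤ (k : ℕ)
    · simp only [h, if_true]
      have h1 : |τ| ^ ((k : ℕ) - (j : ℕ)) ≤ L ^ (2 * ((k : ℕ) - (j : ℕ))) := by
        calc |τ| ^ ((k : ℕ) - (j : ℕ)) ≤ (L ^ 2) ^ ((k : ℕ) - (j : ℕ)) :=
              pow_le_pow_left₀ (abs_nonneg τ) hτ _
          _ = L ^ (2 * ((k : ℕ) - (j : ℕ))) := by rw [← pow_mul]
      have h2 : blockNorm v k ≤ L ^ (2 * (n - 1 - (k : ℕ)) + 1) := hv k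
      have hexp : 2 * ((k : ℕ) - (j : ℕ)) + (2 * (n - 1 - (k : ℕ)) + 1)
          = 2 * (n - 1 - (j : ℕ)) + 1 := by
        have := k.isLt; omega
      have hf : (0 : ℝ) < (((k : ℕ) - (j : ℕ)).factorial : ℝ) := by
        exact_mod_cast Nat.factorial_pos _
      rw [div_mul_eq_mul_div, one_div_mul_eq_div]
      have hAB : |τ| ^ ((k : ℕ) - (j : ℕ)) * blockNorm v k
          ≤ L ^ (2 * (n - 1 - (j : ℕ)) + 1) := calc
        |τ| ^ ((k : ℕ) - (j : ℕ)) * blockNorm v k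
          ≤ L ^ (2 * ((k : ℕ) - (j : ℕ))) * L ^ (2 * (n - 1 - (k : ℕ)) + 1) :=
            mul_le_mul h1 h2 (blockNorm_nonneg v k) (pow_nonneg hL _)
        _ = L ^ (2 * (n - 1 - (j : ℕ)) + 1) := by rw [← pow_add, hexp]
      gcongr
    · simp [h]
  calc ∑ k : Fin n, (if (j : ℕ) ≤ (k : ℕ) then
        |τ| ^ ((k : ℕ) - (j : ℕ)) / (((k : ℕ) - (j : ℕ)).factorial : ℝ) else 0) * blockNorm v k
      ≤ ∑ k : Fin n, (if (j : ℕ) ≤ (k : ℕ) then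
        (1 : ℝ) / (((k : ℕ) - (j : ℕ)).factorial : ℝ) else 0) *
        L ^ (2 * (n - 1 - (j : ℕ)) + 1) := Finset.sum_le_sum fun k _ => step k
    _ = (∑ k : Fin n, (if (j : ℕ) ≤ (k : ℕ) then
        (1 : ℝ) / (((k : ℕ) - (j : ℕ)).factorial : ℝ) else 0)) *
        L ^ (2 * (n - 1 - (j : ℕ)) + 1) := by rw [← Finset.sum_mul]
    _ ≤ 3 * L ^ (2 * (n - 1 - (j : ℕ)) + 1) :=
        mul_le_mul_of_nonneg_right (sum_inv_factorial_le j) (pow_nonneg hL _)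

lemma mcast (j : Fin n) :
    ((2 * (n - 1 - (j : ℕ)) + 1 : ℕ) : ℝ) = 2 * ((n - 1 - (j : ℕ) : ℕ) : ℝ) + 1 := by
  push_cast; ring

lemma ell_nonneg (t : ℝ) (x : E n d) : 0 ≤ ell n d t x :=
  le_trans (Real.rpow_nonneg (abs_nonneg t) _) (le_max_left _ _)

lemma abs_le_sq_ell (t : ℝ) (x : E n d) : |t| ≤ ell n d t x ^ 2 := by
  have h : |t| ^ ((1 : ℝ) / 2) ≤ ell n d t x := le_max_left _ _
  have h0 : (0 : ℝ) ≤ |t| ^ ((1 : ℝ) / 2) := Real.rpow_nonneg (abs_nonneg t) _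
  calc |t| = (|t| ^ ((1 : ℝ) / 2)) ^ 2 := by
        rw [← Real.rpow_natCast (|t| ^ ((1 : ℝ) / 2)) 2, ← Real.rpow_mul (abs_nonneg t)]
        norm_num
    _ ≤ ell n d t x ^ 2 := pow_le_pow_left₀ h0 h 2

lemma blockNorm_le_pow_ell (t : ℝ) (x : E n d) (j : Fin n) :
    blockNorm x j ≤ ell n d t x ^ (2 * (n - 1 - (j : ℕ)) + 1) := by
  set m : ℕ := 2 * (n - 1 - (j : ℕ)) + 1 with hm
  have hmr : ((m : ℕ) : ℝ) = 2 * ((n - 1 - (j : ℕ) : ℕ) : ℝ) + 1 := mcast j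
  have h : blockNorm x j ^ ((1 : ℝ) / (2 * ((n - 1 - (j : ℕ) : ℕ) : ℝ) + 1)) ≤ ell n d t x := by
    refine le_trans ?_ (le_max_right _ _)
    exact le_ciSup (f := fun j : Fin n =>
      blockNorm x j ^ ((1 : ℝ) / (2 * ((n - 1 - (j : ℕ) : ℕ) : ℝ) + 1)))
      (Set.Finite.bddAbove (Set.finite_range _)) j
  rw [← hmr] at h
  have h0 : (0 : ℝ) ≤ blockNorm x j ^ ((1 : ℝ) / ((m : ℕ) : ℝ)) :=
    Real.rpow_nonneg (blockNorm_nonneg x j) _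
  have hmne : ((m : ℕ) : ℝ) ≠ 0 := by positivity
  calc blockNorm x j = (blockNorm x j ^ ((1 : ℝ) / ((m : ℕ) : ℝ))) ^ m := by
        rw [← Real.rpow_natCast (blockNorm x j ^ ((1 : ℝ) / ((m : ℕ) : ℝ))) m,
          ← Real.rpow_mul (blockNorm_nonneg x j), one_div,
          inv_mul_cancel₀ hmne, Real.rpow_one]
    _ ≤ ell n d t x ^ m := pow_le_pow_left₀ h0 h m

lemma ell_le (hn : 0 < n) (t : ℝ) (x : E n d) (M : ℝ) (hM : 0 ≤ M) (ht : |t| ≤ M ^ 2)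
    (hx : ∀ j : Fin n, blockNorm x j ≤ M ^ (2 * (n - 1 - (j : ℕ)) + 1)) :
    ell n d t x ≤ M := by
  have : Nonempty (Fin n) := ⟨⟨0, hn⟩⟩
  refine max_le ?_ (ciSup_le fun j => ?_)
  · calc |t| ^ ((1 : ℝ) / 2) ≤ (M ^ 2) ^ ((1 : ℝ) / 2) :=
          Real.rpow_le_rpow (abs_nonneg t) ht (by norm_num)
      _ = M := by
          rw [← Real.rpow_natCast M 2, ← Real.rpow_mul hM]
          norm_num
  · set m : ℕ := 2 * (n - 1 - (j : ℕ)) + 1 with hm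
    have hmr : ((m : ℕ) : ℝ) = 2 * ((n - 1 - (j : ℕ) : ℕ) : ℝ) + 1 := mcast j
    have hmne : ((m : ℕ) : ℝ) ≠ 0 := by positivity
    rw [show (1 : ℝ) / (2 * ((n - 1 - (j : ℕ) : ℕ) : ℝ) + 1) = 1 / ((m : ℕ) : ℝ) by rw [hmr]]
    calc blockNorm x j ^ ((1 : ℝ) / ((m : ℕ) : ℝ))
        ≤ (M ^ m) ^ ((1 : ℝ) / ((m : ℕ) : ℝ)) :=
          Real.rpow_le_rpow (blockNorm_nonneg x j) (hx j) (by positivity)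
      _ = M := by
          rw [← Real.rpow_natCast M m, ← Real.rpow_mul hM, one_div,
            mul_inv_cancel₀ hmne, Real.rpow_one]

end Stmt5

/-- Quasi-triangle inequalities for `ℓ`:
`ℓ(s-t, y - e^{(s-t)A}x) ≤ 3 ℓ(t-s, x - e^{(t-s)A}y)` and
`ℓ(t-s, x - e^{(t-s)A}y) ≤ 4 (ℓ(t-r, x - e^{(t-r)A}z) + ℓ(r-s, z - e^{(r-s)A}y))`. -/
theorem statement5 (n d : ℕ) (hn : 2 ≤ n) (hd : 1 ≤ d) :
    ∀ t s r : ℝ, ∀ x y z : E n d,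
      ell n d (s - t) (y - toE ((expA n d (s - t)).mulVec (ofE x))) ≤
        3 * ell n d (t - s) (x - toE ((expA n d (t - s)).mulVec (ofE y))) ∧
      ell n d (t - s) (x - toE ((expA n d (t - s)).mulVec (ofE y))) ≤
        4 * (ell n d (t - r) (x - toE ((expA n d (t - r)).mulVec (ofE z))) +
          ell n d (r - s) (z - toE ((expA n d (r - s)).mulVec (ofE y)))) := by
  intro t s r x y z
  set w : E n d := x - toE ((expA n d (t - s)).mulVec (ofE y)) with hw
  set L : ℝ := ell n d (t - s) w with hLdef
  have hL0 : 0 ≤ L := Stmt5.ell_nonneg _ _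
  have hts : |t - s| ≤ L ^ 2 := Stmt5.abs_le_sq_ell _ _
  have hblocks : ∀ k : Fin n, blockNorm w k ≤ L ^ (2 * (n - 1 - (k : ℕ)) + 1) :=
    fun k => Stmt5.blockNorm_le_pow_ell _ _ k
  constructor
  · -- first inequality
    have key : y - toE ((expA n d (s - t)).mulVec (ofE x))
        = -(toE ((expA n d (s - t)).mulVec (ofE w))) := by
      have h1 : (expA n d (s - t)).mulVec (ofE w)
          = (expA n d (s - t)).mulVec (ofE x) - ofE y := by
        have h0 : ofE w = ofE x - (expA n d (t - s)).mulVec (ofE y) := by rw [hw]; simp [ofE, toE]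
        rw [h0, Matrix.mulVec_sub, Matrix.mulVec_mulVec, Stmt5.expA_mul,
          show s - t + (t - s) = 0 by ring, Stmt5.expA_zero, Matrix.one_mulVec]
      have h2 : toE ((expA n d (s - t)).mulVec (ofE w))
          = toE ((expA n d (s - t)).mulVec (ofE x)) - y := by
        rw [h1]; simp [ofE, toE]
      rw [h2, neg_sub]
    rw [key]
    refine Stmt5.ell_le (by omega) _ _ (3 * L) (by positivity) ?_ ?_
    · rw [abs_sub_comm]
      calc |t - s| ≤ L ^ 2 := hts
        _ ≤ (3 * L) ^ 2 := by nlinarith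
    · intro j
      rw [Stmt5.blockNorm_neg]
      calc blockNorm (toE ((expA n d (s - t)).mulVec (ofE w))) j
          ≤ 3 * L ^ (2 * (n - 1 - (j : ℕ)) + 1) := by
            refine Stmt5.est _ _ _ hL0 ?_ hblocks j
            rwa [abs_sub_comm]
        _ ≤ (3 * L) ^ (2 * (n - 1 - (j : ℕ)) + 1) := by
            rw [mul_pow]
            exact mul_le_mul_of_nonneg_right
              (le_self_pow₀ (by norm_num) (by omega)) (pow_nonneg hL0 _)
  · -- triangle inequality
    set u1 : E n d := x - toE ((expA n d (t - r)).mulVec (ofE z)) with hu1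
    set w2 : E n d := z - toE ((expA n d (r - s)).mulVec (ofE y)) with hw2
    set L1 : ℝ := ell n d (t - r) u1 with hL1
    set L2 : ℝ := ell n d (r - s) w2 with hL2
    have h10 : 0 ≤ L1 := Stmt5.ell_nonneg _ _
    have h20 : 0 ≤ L2 := Stmt5.ell_nonneg _ _
    have a1 : |t - r| ≤ L1 ^ 2 := Stmt5.abs_le_sq_ell _ _
    have a2 : |r - s| ≤ L2 ^ 2 := Stmt5.abs_le_sq_ell _ _
    have key : w = u1 + toE ((expA n d (t - r)).mulVec (ofE w2)) := by
      have h1 : (expA n d (t - r)).mulVec (ofE w2)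
          = (expA n d (t - r)).mulVec (ofE z) - (expA n d (t - s)).mulVec (ofE y) := by
        have h0 : ofE w2 = ofE z - (expA n d (r - s)).mulVec (ofE y) := by rw [hw2]; simp [ofE, toE]
        rw [h0, Matrix.mulVec_sub, Matrix.mulVec_mulVec, Stmt5.expA_mul,
          show t - r + (r - s) = t - s by ring]
      have h2 : toE ((expA n d (t - r)).mulVec (ofE w2))
          = toE ((expA n d (t - r)).mulVec (ofE z)) - toE ((expA n d (t - s)).mulVec (ofE y)) := by
        rw [h1]; simp [ofE, toE]
      rw [hw, hu1, h2]; abel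
    refine Stmt5.ell_le (by omega) _ _ _ (by positivity) ?_ ?_
    · calc |t - s| ≤ |t - r| + |r - s| := abs_sub_le t r s
        _ ≤ L1 ^ 2 + L2 ^ 2 := add_le_add a1 a2
        _ ≤ (4 * (L1 + L2)) ^ 2 := by nlinarith [mul_nonneg h10 h20]
    · intro j
      rw [key]
      refine (Stmt5.blockNorm_add_le _ _ j).trans ?_
      have b1 : blockNorm u1 j ≤ L1 ^ (2 * (n - 1 - (j : ℕ)) + 1) :=
        Stmt5.blockNorm_le_pow_ell _ _ j
      have b2 : blockNorm (toE ((expA n d (t - r)).mulVec (ofE w2))) j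
          ≤ 3 * (L1 + L2) ^ (2 * (n - 1 - (j : ℕ)) + 1) := by
        refine Stmt5.est _ _ _ (by positivity) ?_ ?_ j
        · calc |t - r| ≤ L1 ^ 2 := a1
            _ ≤ (L1 + L2) ^ 2 := by nlinarith
        · intro k
          calc blockNorm w2 k ≤ L2 ^ (2 * (n - 1 - (k : ℕ)) + 1) :=
                Stmt5.blockNorm_le_pow_ell _ _ k
            _ ≤ (L1 + L2) ^ (2 * (n - 1 - (k : ℕ)) + 1) :=
                pow_le_pow_left₀ h20 (by linarith) _
      calc blockNorm u1 j + blockNorm (toE ((expA n d (t - r)).mulVec (ofE w2))) j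
          ≤ L1 ^ (2 * (n - 1 - (j : ℕ)) + 1)
            + 3 * (L1 + L2) ^ (2 * (n - 1 - (j : ℕ)) + 1) := add_le_add b1 b2
        _ ≤ (L1 + L2) ^ (2 * (n - 1 - (j : ℕ)) + 1)
            + 3 * (L1 + L2) ^ (2 * (n - 1 - (j : ℕ)) + 1) := by
            have := pow_le_pow_left₀ h10 (by linarith : L1 ≤ L1 + L2)
              (2 * (n - 1 - (j : ℕ)) + 1)
            linarith
        _ = 4 * (L1 + L2) ^ (2 * (n - 1 - (j : ℕ)) + 1) := by ring
        _ ≤ (4 * (L1 + L2)) ^ (2 * (n - 1 - (j : ℕ)) + 1) := by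
            rw [mul_pow]
            exact mul_le_mul_of_nonneg_right
              (le_self_pow₀ (by norm_num) (by omega)) (pow_nonneg (by positivity) _)
end
end

section
/- For any r > 0 and (t_0,x_0), (t_0',x_0') ∈ ℝ × ℝ^{nd}, if Q_r(t_0,x_0) ∩ Q_r(t_0',x_0') ≠ ∅, then Q_r(t_0,x_0) ⊆ Q_{20r}(t_0',x_0'). -/
open MeasureTheory Real Matrix Finset
open scoped FourierTransform ENNReal NNReal

noncomputable section

variable {n d : ℕ}

section Helpers

lemma vandermonde_factorial (a b : ℝ) (m : ℕ) :
    ∑ i ∈ Finset.range (m+1), a ^ i / (i.factorial : ℝ) * (b ^ (m - i) / ((m - i).factorial : ℝ))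
      = (a + b) ^ m / (m.factorial : ℝ) := by
  rw [add_pow, Finset.sum_div]
  refine Finset.sum_congr rfl fun i hi => ?_
  have hi' : i ≤ m := Nat.lt_succ_iff.mp (Finset.mem_range.mp hi)
  rw [Nat.cast_choose ℝ hi']
  have h1 : (i.factorial : ℝ) ≠ 0 := by positivity
  have h2 : ((m - i).factorial : ℝ) ≠ 0 := by positivity
  have h3 : (m.factorial : ℝ) ≠ 0 := by positivity
  field_simp

lemma expA_mul (a b : ℝ) : expA n d a * expA n d b = expA n d (a + b) := by
  ext ⟨pj, pi⟩ ⟨qj, qi⟩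
  rw [Matrix.mul_apply, Fintype.sum_prod_type]
  have h1 : ∀ k : Fin n, ∑ i' : Fin d,
      expA n d a (pj,pi) (k,i') * expA n d b (k,i') (qj,qi)
      = expA n d a (pj,pi) (k,pi) * expA n d b (k,pi) (qj,qi) := fun k => by
    refine Finset.sum_eq_single pi (fun i' _ hne => ?_) (by simp)
    simp [expA, (Ne.symm hne : ¬ pi = i')]
  simp only [h1]
  by_cases hii : pi = qi
  · subst hii
    by_cases hjj : pj ≤ qj
    · simp only [expA, eq_self_iff_true, and_true]
      rw [if_pos hjj]
      have conv1 : (∑ k : Fin n, (if pj ≤ k then a ^ (k.val - pj.val) / ((k.val - pj.val).factorial : ℝ) else 0)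
            * (if k ≤ qj then b ^ (qj.val - k.val) / ((qj.val - k.val).factorial : ℝ) else 0))
          = ∑ k ∈ Finset.range n, (if pj.val ≤ k then a ^ (k - pj.val) / ((k - pj.val).factorial : ℝ) else 0)
            * (if k ≤ qj.val then b ^ (qj.val - k) / ((qj.val - k).factorial : ℝ) else 0) := by
        rw [← Fin.sum_univ_eq_sum_range]
        exact Finset.sum_congr rfl fun k _ => by simp only [Fin.le_def]
      have sub : Finset.Ico pj.val (qj.val + 1) ⊆ Finset.range n := by
        intro x hx; simp only [Finset.mem_Ico] at hx; simp only [Finset.mem_range]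
        exact lt_of_lt_of_le hx.2 qj.isLt
      have conv2 : ∑ k ∈ Finset.range n, (if pj.val ≤ k then a ^ (k - pj.val) / ((k - pj.val).factorial : ℝ) else 0)
            * (if k ≤ qj.val then b ^ (qj.val - k) / ((qj.val - k).factorial : ℝ) else 0)
          = ∑ k ∈ Finset.Ico pj.val (qj.val + 1), a ^ (k - pj.val) / ((k - pj.val).factorial : ℝ)
            * (b ^ (qj.val - k) / ((qj.val - k).factorial : ℝ)) := by
        rw [← Finset.sum_subset sub]
        · refine Finset.sum_congr rfl fun k hk => ?_
          simp only [Finset.mem_Ico] at hk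
          rw [if_pos hk.1, if_pos (Nat.lt_succ_iff.mp hk.2)]
        · intro x _ hx
          simp only [Finset.mem_Ico, not_and_or, not_le, not_lt] at hx
          rcases hx with h | h
          · have hp : ¬ (pj.val ≤ x) := by omega
            simp [hp]
          · have hq : ¬ (x ≤ qj.val) := by omega
            simp [hq]
      rw [conv1, conv2, Finset.sum_Ico_eq_sum_range]
      have he : qj.val + 1 - pj.val = (qj.val - pj.val) + 1 := by omega
      rw [he, ← vandermonde_factorial a b (qj.val - pj.val)]
      refine Finset.sum_congr rfl fun i hi => ?_
      have e1 : pj.val + i - pj.val = i := by omega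
      have e2 : qj.val - (pj.val + i) = qj.val - pj.val - i := by omega
      rw [e1, e2]
    · have hz : expA n d (a+b) (pj,pi) (qj,pi) = 0 := by simp [expA, hjj]
      rw [hz]
      refine Finset.sum_eq_zero fun k _ => ?_
      rcases le_or_gt pj k with h1 | h1
      · exact mul_eq_zero_of_right _
          (by simp only [expA]; rw [if_neg (by rintro ⟨h2, _⟩; exact hjj (le_trans h1 h2))])
      · exact mul_eq_zero_of_left
          (by simp only [expA]; rw [if_neg (by rintro ⟨h2, _⟩; exact absurd h2 (not_le.mpr h1))]) _
  · have hz : expA n d (a+b) (pj,pi) (qj,qi) = 0 := by simp [expA, hii]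
    rw [hz]
    exact Finset.sum_eq_zero fun k _ =>
      mul_eq_zero_of_right _ (by simp [expA, hii])

/-- The `j`-th block of `x` as an element of `ℝ^d`. -/
def blk (x : E n d) (j : Fin n) : EuclideanSpace ℝ (Fin d) := WithLp.toLp 2 (fun i => x (j, i))

lemma blockNorm_eq (x : E n d) (j : Fin n) : blockNorm x j = ‖blk x j‖ := by
  rw [EuclideanSpace.norm_eq]
  simp [blockNorm, blk, sq_abs]

lemma blockNorm_nonneg (x : E n d) (j : Fin n) : 0 ≤ blockNorm x j := Real.sqrt_nonneg _

lemma blockNorm_add_le (x y : E n d) (j : Fin n) :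
    blockNorm (x + y) j ≤ blockNorm x j + blockNorm y j := by
  simp only [blockNorm_eq]
  have h : blk (x + y) j = blk x j + blk y j := rfl
  rw [h]; exact norm_add_le _ _

lemma blockNorm_sub_le (x y : E n d) (j : Fin n) :
    blockNorm (x - y) j ≤ blockNorm x j + blockNorm y j := by
  simp only [blockNorm_eq]
  have h : blk (x - y) j = blk x j - blk y j := rfl
  rw [h]; exact norm_sub_le _ _

lemma blk_mulVec (t : ℝ) (x : E n d) (j : Fin n) :
    blk (toE ((expA n d t).mulVec (ofE x))) j
      = ∑ k : Fin n, (if j ≤ k then t ^ (k.val - j.val) / ((k.val - j.val).factorial : ℝ) else 0) • blk x k := by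
  ext i
  show ((expA n d t).mulVec (ofE x)) (j, i) = _
  rw [Matrix.mulVec, dotProduct, Fintype.sum_prod_type]
  have h : ∀ k : Fin n, ∑ i' : Fin d, expA n d t (j,i) (k,i') * ofE x (k,i')
      = (if j ≤ k then t ^ (k.val - j.val) / ((k.val - j.val).factorial : ℝ) else 0) * x (k, i) := by
    intro k
    rw [Finset.sum_eq_single i (fun i' _ hne => by simp [expA, (Ne.symm hne : ¬ i = i'), ofE]) (by simp)]
    simp only [expA, ofE, ite_and]
    by_cases h : j ≤ k <;> simp [h]
  rw [Finset.sum_congr rfl fun k _ => h k]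
  rw [WithLp.ofLp_sum, Finset.sum_apply]
  refine Finset.sum_congr rfl fun k _ => ?_
  by_cases h : j ≤ k <;> simp [h, blk]

lemma blockNorm_mulVec_le (t : ℝ) (x : E n d) (j : Fin n) :
    blockNorm (toE ((expA n d t).mulVec (ofE x))) j
      ≤ ∑ k : Fin n, (if j ≤ k then |t| ^ (k.val - j.val) / ((k.val - j.val).factorial : ℝ) else 0) * blockNorm x k := by
  rw [blockNorm_eq, blk_mulVec]
  refine le_trans (norm_sum_le _ _) (Finset.sum_le_sum fun k _ => ?_)
  rw [norm_smul, Real.norm_eq_abs, blockNorm_eq]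
  by_cases h : j ≤ k
  · simp only [h, if_true]
    rw [abs_div, abs_pow, Nat.abs_cast]
  · simp [h]

lemma sum_coef_le_exp (j : Fin n) :
    ∑ k : Fin n, (if j ≤ k then (2:ℝ) ^ (k.val - j.val) / ((k.val - j.val).factorial : ℝ) else 0)
      ≤ Real.exp 2 := by
  have conv1 : (∑ k : Fin n, (if j ≤ k then (2:ℝ) ^ (k.val - j.val) / ((k.val - j.val).factorial : ℝ) else 0))
      = ∑ m ∈ Finset.range n, (if j.val ≤ m then (2:ℝ) ^ (m - j.val) / ((m - j.val).factorial : ℝ) else 0) := by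
    rw [← Fin.sum_univ_eq_sum_range]
    exact Finset.sum_congr rfl fun k _ => by simp only [Fin.le_def]
  rw [conv1]
  have sub : Finset.Ico j.val n ⊆ Finset.range n := by
    intro x hx; simp only [Finset.mem_Ico] at hx; exact Finset.mem_range.mpr hx.2
  have conv2 : ∑ m ∈ Finset.range n, (if j.val ≤ m then (2:ℝ) ^ (m - j.val) / ((m - j.val).factorial : ℝ) else 0)
      = ∑ m ∈ Finset.Ico j.val n, (2:ℝ) ^ (m - j.val) / ((m - j.val).factorial : ℝ) := by
    rw [← Finset.sum_subset sub]
    · exact Finset.sum_congr rfl fun m hm => if_pos (Finset.mem_Ico.mp hm).1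
    · intro x hx hx2
      simp only [Finset.mem_range] at hx
      simp only [Finset.mem_Ico, not_and_or, not_le, not_lt] at hx2
      have h : ¬ j.val ≤ x := by omega
      simp [h]
  rw [conv2, Finset.sum_Ico_eq_sum_range]
  have h : ∀ m ∈ Finset.range (n - j.val), (2:ℝ) ^ (j.val + m - j.val) / ((j.val + m - j.val).factorial : ℝ)
      = (2:ℝ) ^ m / (m.factorial : ℝ) := fun m _ => by rw [show j.val + m - j.val = m from by omega]
  rw [Finset.sum_congr rfl h]
  exact Real.sum_le_exp_of_nonneg (by norm_num) _

lemma exp_two_lt : Real.exp 2 < 7.5 := by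
  have h1 : Real.exp 2 = Real.exp 1 * Real.exp 1 := by
    rw [← Real.exp_add]; norm_num
  have h2 := Real.exp_one_lt_d9
  nlinarith [Real.exp_pos 1]

lemma block_le_of_rpow_le {a r : ℝ} (m : ℕ) (ha : 0 ≤ a)
    (h : a ^ ((1:ℝ)/(2*(m:ℝ)+1)) ≤ r) : a ≤ r ^ (2*m+1) := by
  have he : (0:ℝ) < 2*(m:ℝ)+1 := by positivity
  have h2 := Real.rpow_le_rpow (Real.rpow_nonneg ha _) h he.le
  rw [← Real.rpow_natCast r (2*m+1)]
  rw [← Real.rpow_mul ha, one_div_mul_cancel he.ne', Real.rpow_one] at h2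
  convert h2 using 2
  push_cast; ring

lemma rpow_le_of_block_le {a r : ℝ} (m : ℕ) (ha : 0 ≤ a) (hr : 0 ≤ r)
    (h : a ≤ r ^ (2*m+1)) : a ^ ((1:ℝ)/(2*(m:ℝ)+1)) ≤ r := by
  have he : (0:ℝ) < 2*(m:ℝ)+1 := by positivity
  have h' : a ≤ r ^ ((2*(m:ℝ)+1) : ℝ) := by
    rwa [show (2*(m:ℝ)+1 : ℝ) = ((2*m+1 : ℕ) : ℝ) from by push_cast; ring, Real.rpow_natCast]
  calc a ^ ((1:ℝ)/(2*(m:ℝ)+1)) ≤ (r ^ ((2*(m:ℝ)+1):ℝ)) ^ ((1:ℝ)/(2*(m:ℝ)+1)) :=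
        Real.rpow_le_rpow ha h' (by positivity)
    _ = r := by rw [← Real.rpow_mul hr, mul_one_div, div_self he.ne', Real.rpow_one]

lemma abs_le_of_sqrt_le {a r : ℝ} (h : |a| ^ ((1:ℝ)/2) ≤ r) : |a| ≤ r ^ 2 := by
  have h2 := Real.rpow_le_rpow (Real.rpow_nonneg (abs_nonneg a) _) h (by norm_num : (0:ℝ) ≤ 2)
  rw [← Real.rpow_natCast r 2, show ((2:ℕ):ℝ) = (2:ℝ) from by norm_num]
  rwa [← Real.rpow_mul (abs_nonneg a), one_div_mul_cancel (by norm_num : (2:ℝ) ≠ 0),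
    Real.rpow_one] at h2

lemma sqrt_le_of_abs_le {a r : ℝ} (hr : 0 ≤ r) (h : |a| ≤ r ^ 2) : |a| ^ ((1:ℝ)/2) ≤ r := by
  have h' : |a| ≤ r ^ (((2:ℕ)):ℝ) := by rwa [Real.rpow_natCast]
  calc |a| ^ ((1:ℝ)/2) ≤ (r ^ (((2:ℕ)):ℝ)) ^ ((1:ℝ)/2) :=
        Real.rpow_le_rpow (abs_nonneg a) h' (by norm_num)
    _ = r := by
        rw [← Real.rpow_mul hr]
        norm_num

end Helpers

/-- If `Q_r(t₀,x₀) ∩ Q_r(t₀',x₀') ≠ ∅` then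
`Q_r(t₀,x₀) ⊆ Q_{20r}(t₀',x₀')`. -/
theorem statement6 (n d : ℕ) (hn : 2 ≤ n) (hd : 1 ≤ d)
    (r : ℝ) (hr : 0 < r) (t₀ t₀' : ℝ) (x₀ x₀' : E n d)
    (hne : (Qball n d r t₀ x₀ ∩ Qball n d r t₀' x₀').Nonempty) :
    Qball n d r t₀ x₀ ⊆ Qball n d (20 * r) t₀' x₀' := by
  obtain ⟨⟨s, z⟩, hsz1, hsz2⟩ := hne
  rintro ⟨t, x⟩ htx
  simp only [Qball, Set.mem_setOf_eq] at htx hsz1 hsz2 ⊢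
  have extract : ∀ (τ : ℝ) (w : E n d) (R : ℝ), ell n d τ w ≤ R →
      |τ| ≤ R^2 ∧ ∀ k : Fin n, blockNorm w k ≤ R ^ (2*(n-1-k.val)+1) := by
    intro τ w R h
    rw [ell, max_le_iff] at h
    refine ⟨abs_le_of_sqrt_le h.1, fun k => ?_⟩
    have hk : blockNorm w k ^ ((1:ℝ)/(2*((n-1-k.val : ℕ) : ℝ)+1)) ≤ R := by
      refine le_trans ?_ h.2
      exact le_ciSup (f := fun j : Fin n => blockNorm w j ^ ((1:ℝ)/(2*((n - 1 - (j:ℕ) : ℕ) : ℝ)+1)))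
        (Finite.bddAbove_range _) k
    exact block_le_of_rpow_le _ (blockNorm_nonneg w k) hk
  obtain ⟨ht1, hb1⟩ := extract _ _ _ htx
  obtain ⟨ht2, hb2⟩ := extract _ _ _ hsz1
  obtain ⟨ht3, hb3⟩ := extract _ _ _ hsz2
  have a1 := abs_le.mp ht1
  have a2 := abs_le.mp ht2
  have a3 := abs_le.mp ht3
  have hr20 : (0:ℝ) ≤ 20*r := by linarith
  have hδ : |t - s| ≤ 2*r^2 := abs_le.mpr ⟨by linarith, by linarith⟩
  rw [ell, max_le_iff]
  haveI : Nonempty (Fin n) := ⟨⟨0, by omega⟩⟩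
  constructor
  · exact sqrt_le_of_abs_le hr20 (abs_le.mpr ⟨by nlinarith [sq_nonneg r], by nlinarith [sq_nonneg r]⟩)
  · apply ciSup_le
    intro j
    apply rpow_le_of_block_le _ (blockNorm_nonneg _ _) hr20
    -- decomposition
    have comp1 : (expA n d (t - s)).mulVec ((expA n d (s - t₀)).mulVec (ofE x₀))
        = (expA n d (t - t₀)).mulVec (ofE x₀) := by
      rw [Matrix.mulVec_mulVec, expA_mul, show t - s + (s - t₀) = t - t₀ from by ring]
    have comp2 : (expA n d (t - s)).mulVec ((expA n d (s - t₀')).mulVec (ofE x₀'))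
        = (expA n d (t - t₀')).mulVec (ofE x₀') := by
      rw [Matrix.mulVec_mulVec, expA_mul, show t - s + (s - t₀') = t - t₀' from by ring]
    have key : x - toE ((expA n d (t - t₀')).mulVec (ofE x₀'))
        = (x - toE ((expA n d (t - t₀)).mulVec (ofE x₀)))
          + toE ((expA n d (t - s)).mulVec (ofE
            ((z - toE ((expA n d (s - t₀')).mulVec (ofE x₀')))
             - (z - toE ((expA n d (s - t₀)).mulVec (ofE x₀)))))) := by
      have h0 : ofE ((z - toE ((expA n d (s - t₀')).mulVec (ofE x₀')))
             - (z - toE ((expA n d (s - t₀)).mulVec (ofE x₀))))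
          = (expA n d (s - t₀)).mulVec (ofE x₀) - (expA n d (s - t₀')).mulVec (ofE x₀') := by
        simp only [ofE, toE, WithLp.ofLp_sub, WithLp.ofLp_toLp]
        abel
      rw [h0, Matrix.mulVec_sub, comp1, comp2]
      have h1 : toE ((expA n d (t - t₀)).mulVec (ofE x₀) - (expA n d (t - t₀')).mulVec (ofE x₀'))
          = toE ((expA n d (t - t₀)).mulVec (ofE x₀)) - toE ((expA n d (t - t₀')).mulVec (ofE x₀')) := by simp only [toE, WithLp.toLp_sub]
      rw [h1]; abel
    rw [key]
    set w2 : E n d := z - toE ((expA n d (s - t₀)).mulVec (ofE x₀)) with hw2def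
    set w3 : E n d := z - toE ((expA n d (s - t₀')).mulVec (ofE x₀')) with hw3def
    calc blockNorm ((x - toE ((expA n d (t - t₀)).mulVec (ofE x₀)))
            + toE ((expA n d (t - s)).mulVec (ofE (w3 - w2)))) j
        ≤ blockNorm (x - toE ((expA n d (t - t₀)).mulVec (ofE x₀))) j
          + blockNorm (toE ((expA n d (t - s)).mulVec (ofE (w3 - w2)))) j :=
          blockNorm_add_le _ _ _
      _ ≤ r ^ (2*(n-1-j.val)+1)
          + ∑ k : Fin n, (if j ≤ k then |t - s| ^ (k.val - j.val) / ((k.val - j.val).factorial : ℝ) else 0)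
              * blockNorm (w3 - w2) k :=
          add_le_add (hb1 j) (blockNorm_mulVec_le _ _ _)
      _ ≤ r ^ (2*(n-1-j.val)+1)
          + ∑ k : Fin n, (if j ≤ k then (2:ℝ) ^ (k.val - j.val) / ((k.val - j.val).factorial : ℝ) else 0)
              * (2 * r ^ (2*(n-1-j.val)+1)) := by
          refine add_le_add_right (Finset.sum_le_sum fun k _ => ?_) _
          by_cases h : j ≤ k
          · simp only [h, if_true]
            have hbn : blockNorm (w3 - w2) k ≤ 2 * r ^ (2*(n-1-k.val)+1) := by
              have h3 := hb3 k
              have h2 := hb2 k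
              have := blockNorm_sub_le w3 w2 k
              linarith
            have hpow : |t - s| ^ (k.val - j.val) ≤ (2*r^2) ^ (k.val - j.val) :=
              pow_le_pow_left₀ (abs_nonneg _) hδ _
            have hfac : (0:ℝ) < ((k.val - j.val).factorial : ℝ) := by positivity
            have hexp : (2*r^2) ^ (k.val-j.val) * r^(2*(n-1-k.val)+1)
                = 2^(k.val-j.val) * r^(2*(n-1-j.val)+1) := by
              have hjk : j.val ≤ k.val := h
              have hkn : k.val < n := k.isLt
              rw [mul_pow, ← pow_mul, mul_assoc, ← pow_add]
              congr 2
              omega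
            calc |t - s| ^ (k.val - j.val) / ((k.val - j.val).factorial : ℝ) * blockNorm (w3 - w2) k
                ≤ (2*r^2) ^ (k.val - j.val) / ((k.val - j.val).factorial : ℝ) * (2 * r ^ (2*(n-1-k.val)+1)) := by
                  apply mul_le_mul ?_ hbn (blockNorm_nonneg _ _) (by positivity)
                  gcongr
              _ = (2:ℝ) ^ (k.val - j.val) / ((k.val - j.val).factorial : ℝ) * (2 * r ^ (2*(n-1-j.val)+1)) := by
                  rw [div_mul_eq_mul_div, div_mul_eq_mul_div]
                  congr 1
                  calc (2*r^2) ^ (k.val-j.val) * (2 * r ^ (2*(n-1-k.val)+1))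
                      = ((2*r^2) ^ (k.val-j.val) * r ^ (2*(n-1-k.val)+1)) * 2 := by ring
                    _ = (2^(k.val-j.val) * r^(2*(n-1-j.val)+1)) * 2 := by rw [hexp]
                    _ = (2:ℝ) ^ (k.val-j.val) * (2 * r ^ (2*(n-1-j.val)+1)) := by ring
          · simp [h]
      _ = (1 + 2*(∑ k : Fin n, (if j ≤ k then (2:ℝ) ^ (k.val - j.val) / ((k.val - j.val).factorial : ℝ) else 0)))
            * r ^ (2*(n-1-j.val)+1) := by
          rw [← Finset.sum_mul]; ring
      _ ≤ (1 + 2*Real.exp 2) * r ^ (2*(n-1-j.val)+1) := by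
          apply mul_le_mul_of_nonneg_right _ (by positivity)
          linarith [sum_coef_le_exp j]
      _ ≤ 16 * r ^ (2*(n-1-j.val)+1) := by
          apply mul_le_mul_of_nonneg_right _ (by positivity)
          linarith [exp_two_lt]
      _ ≤ (20*r) ^ (2*(n-1-j.val)+1) := by
          rw [mul_pow]
          apply mul_le_mul_of_nonneg_right _ (pow_nonneg hr.le _)
          calc (16:ℝ) ≤ 20 := by norm_num
            _ ≤ 20^(2*(n-1-j.val)+1) := le_self_pow₀ (by norm_num) (by omega)
end
end
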